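/- arXiv:2211.08215 — 5 statements merged into one kernel-verified Lean document; each statement's English description precedes it below -/
import Mathlib

section
/- Let X, Y be real symmetric positive semidefinite n×n matrices, y ∈ ℝ^m, and τ, κ ≥ 0. If Tr(A_i X) = b_i τ for all i = 1,…,m, ∑_{i=1}^m y_i A_i + Y = τ C, and κ = b^T y − Tr(C X), then XY = 0 (the zero matrix) and τκ = 0. -/
open Matrix BigOperators
open scoped MatrixOrder

lemma trace_transpose_mul_self_nonneg {n p : ℕ} (M : Matrix (Fin n) (Fin p) ℝ) :
    0 ≤ (Mᵀ * M).trace := by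
  rw [Matrix.trace]
  apply Finset.sum_nonneg
  intro j _
  simp only [Matrix.diag_apply, Matrix.mul_apply, Matrix.transpose_apply]
  exact Finset.sum_nonneg fun i _ => mul_self_nonneg _

lemma transpose_mul_self_eq_zero_of_trace {n p : ℕ} (M : Matrix (Fin n) (Fin p) ℝ)
    (h : (Mᵀ * M).trace = 0) : M = 0 := by
  have key : ∀ j ∈ Finset.univ, (Mᵀ * M).diag j = 0 := by
    apply (Finset.sum_eq_zero_iff_of_nonneg _).mp h
    intro j _
    simp only [Matrix.diag_apply, Matrix.mul_apply, Matrix.transpose_apply]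
    exact Finset.sum_nonneg fun i _ => mul_self_nonneg _
  ext i j
  have hj := key j (Finset.mem_univ j)
  simp only [Matrix.diag_apply, Matrix.mul_apply, Matrix.transpose_apply] at hj
  have := (Finset.sum_eq_zero_iff_of_nonneg (fun i _ => mul_self_nonneg (M i j))).mp hj i
    (Finset.mem_univ i)
  simpa using mul_self_eq_zero.mp this

/-- For the homogeneous feasibility model of a primal-dual SDP pair:
if `X, Y` are positive semidefinite, `τ, κ ≥ 0`, `Tr(Aᵢ X) = bᵢ τ` for all `i`,
`∑ yᵢ Aᵢ + Y = τ • C` and `κ = bᵀy − Tr(C X)`, then `XY = 0` and `τκ = 0`. -/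
theorem homogeneous_model_complementarity
    (n m : ℕ)
    (A : Fin m → Matrix (Fin n) (Fin n) ℝ) (C : Matrix (Fin n) (Fin n) ℝ)
    (b : Fin m → ℝ)
    (hAsymm : ∀ i, (A i).IsSymm) (hCsymm : C.IsSymm)
    (X Y : Matrix (Fin n) (Fin n) ℝ)
    (hX : X.PosSemidef) (hY : Y.PosSemidef)
    (y : Fin m → ℝ) (τ κ : ℝ)
    (hτ : 0 ≤ τ) (hκ : 0 ≤ κ)
    (h1 : ∀ i, (A i * X).trace = b i * τ)
    (h2 : (∑ i, y i • A i) + Y = τ • C)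
    (h3 : κ = (∑ i, b i * y i) - (C * X).trace) :
    X * Y = 0 ∧ τ * κ = 0 := by
  -- Y = τ • C - ∑ y i • A i
  have hYeq : Y = τ • C - ∑ i, y i • A i := by
    rw [← h2]; abel
  -- trace (X * Y) = - τ * κ
  have htr : (X * Y).trace = -(τ * κ) := by
    have hXC : (X * C).trace = (C * X).trace := Matrix.trace_mul_comm X C
    have hXA : ∀ i, (X * A i).trace = b i * τ := fun i => by
      rw [Matrix.trace_mul_comm]; exact h1 i
    calc (X * Y).trace = (X * (τ • C - ∑ i, y i • A i)).trace := by rw [← hYeq]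
      _ = τ * (X * C).trace - ∑ i, y i * (X * A i).trace := by
          rw [Matrix.mul_sub, Matrix.trace_sub, Matrix.mul_smul, Matrix.trace_smul,
            Matrix.mul_sum, Matrix.trace_sum]
          simp only [Matrix.mul_smul, Matrix.trace_smul, smul_eq_mul]
      _ = τ * (C * X).trace - ∑ i, y i * (b i * τ) := by
          rw [hXC]; congr 1; exact Finset.sum_congr rfl fun i _ => by rw [hXA i]
      _ = -(τ * κ) := by
          have hs : ∑ i, y i * (b i * τ) = τ * ∑ i, b i * y i := by
            rw [Finset.mul_sum]
            exact Finset.sum_congr rfl fun i _ => by ring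
          rw [h3, hs]; ring
  -- square roots
  set S := CFC.sqrt X with hSdef
  set T := CFC.sqrt Y with hTdef
  have hSsym : Sᵀ = S := by
    have := (CFC.sqrt_nonneg X).posSemidef.isHermitian
    exact (Matrix.isHermitian_iff_isSymm.mp this).eq
  have hTsym : Tᵀ = T := by
    have := (CFC.sqrt_nonneg Y).posSemidef.isHermitian
    exact (Matrix.isHermitian_iff_isSymm.mp this).eq
  have hXS : S * S = X := CFC.sqrt_mul_sqrt_self X hX.nonneg
  have hYT : T * T = Y := CFC.sqrt_mul_sqrt_self Y hY.nonneg
  have hconj : (T * S)ᵀ * (T * S) = S * T * T * S := by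
    rw [Matrix.transpose_mul, hSsym, hTsym]
    simp only [Matrix.mul_assoc]
  have htrcyc : ((T * S)ᵀ * (T * S)).trace = (X * Y).trace := by
    rw [hconj, ← hXS, ← hYT]
    rw [Matrix.trace_mul_comm (S * T * T) S]
    simp only [Matrix.mul_assoc]
  have hnn : 0 ≤ (X * Y).trace := htrcyc ▸ trace_transpose_mul_self_nonneg (T * S)
  have hτκ : τ * κ = 0 :=
    le_antisymm (by linarith [htr ▸ hnn]) (mul_nonneg hτ hκ)
  have htr0 : ((T * S)ᵀ * (T * S)).trace = 0 := by rw [htrcyc, htr, hτκ, neg_zero]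
  have hTS : T * S = 0 := transpose_mul_self_eq_zero_of_trace _ htr0
  have hST : S * T = 0 := by
    have : (T * S)ᵀ = 0 := by rw [hTS, Matrix.transpose_zero]
    rwa [Matrix.transpose_mul, hSsym, hTsym] at this
  refine ⟨?_, hτκ⟩
  have : X * Y = S * (S * T * T) := by rw [← hXS, ← hYT]; simp only [Matrix.mul_assoc]
  rw [this, hST, Matrix.zero_mul, Matrix.mul_zero]
end

section
/- Suppose (X*, y*, Y*, τ*, κ*) satisfies the homogeneous feasibility model: Tr(A_i X*) = b_i τ* for all i, ∑_{i=1}^m y*_i A_i + Y* = τ* C, κ* = b^T y* − Tr(C X*), X*, Y* ∈ S^n_+, τ* ≥ 0, κ* ≥ 0. If κ* = 0 and τ* > 0, then (X*/τ*, y*/τ*, Y*/τ*) is an optimal solution of the primal-dual SDP pair with zero duality gap; that is, X*/τ* ∈ S^n_+ with Tr(A_i (X*/τ*)) = b_i for all i, Y*/τ* ∈ S^n_+ with ∑_{i=1}^m (y*_i/τ*) A_i + Y*/τ* = C, and Tr(C (X*/τ*)) = b^T (y*/τ*). -/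
open Matrix BigOperators

lemma posSemidef_smul_of_nonneg {n : ℕ} {M : Matrix (Fin n) (Fin n) ℝ}
    (hM : M.PosSemidef) {c : ℝ} (hc : 0 ≤ c) : (c • M).PosSemidef := by
  refine ⟨by unfold Matrix.IsHermitian; rw [Matrix.conjTranspose_smul, hM.1]; simp, fun x => ?_⟩
  have := hM.2 x
  simpa [Matrix.smul_mulVec, dotProduct_smul, Finsupp.mul_sum, mul_assoc, mul_left_comm] using mul_nonneg hc this

/-- If `(X*, y*, Y*, τ*, κ*)` satisfies the homogeneous feasibility model
with `κ* = 0` and `τ* > 0`, then `(X*/τ*, y*/τ*, Y*/τ*)` is an optimal solution of the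
primal-dual SDP pair with zero duality gap. -/
theorem homogeneous_model_solution_gives_optimal_pair
    (n m : ℕ)
    (A : Fin m → Matrix (Fin n) (Fin n) ℝ) (C : Matrix (Fin n) (Fin n) ℝ)
    (b : Fin m → ℝ)
    (hAsymm : ∀ i, (A i).IsSymm) (hCsymm : C.IsSymm)
    (X Y : Matrix (Fin n) (Fin n) ℝ)
    (y : Fin m → ℝ) (τ κ : ℝ)
    (hX : X.PosSemidef) (hY : Y.PosSemidef)
    (h1 : ∀ i, (A i * X).trace = b i * τ)
    (h2 : (∑ i, y i • A i) + Y = τ • C)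
    (h3 : κ = (∑ i, b i * y i) - (C * X).trace)
    (hκ : κ = 0) (hτ : 0 < τ) :
    (τ⁻¹ • X).PosSemidef ∧
    (∀ i, (A i * (τ⁻¹ • X)).trace = b i) ∧
    (τ⁻¹ • Y).PosSemidef ∧
    ((∑ i, (τ⁻¹ * y i) • A i) + τ⁻¹ • Y = C) ∧
    (C * (τ⁻¹ • X)).trace = ∑ i, b i * (τ⁻¹ * y i) := by
  have hτ0 : τ ≠ 0 := ne_of_gt hτ
  have hτinv : (0:ℝ) ≤ τ⁻¹ := le_of_lt (inv_pos.mpr hτ)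
  refine ⟨posSemidef_smul_of_nonneg hX hτinv, ?_, posSemidef_smul_of_nonneg hY hτinv, ?_, ?_⟩
  · intro i
    rw [Matrix.mul_smul, trace_smul, h1 i, smul_eq_mul]
    field_simp
  · have : (∑ i, (τ⁻¹ * y i) • A i) + τ⁻¹ • Y = τ⁻¹ • ((∑ i, y i • A i) + Y) := by
      rw [smul_add, Finset.smul_sum]
      congr 1
      exact Finset.sum_congr rfl fun i _ => (smul_smul τ⁻¹ (y i) (A i)).symm
    rw [this, h2, smul_smul, inv_mul_cancel₀ hτ0, one_smul]
  · have hgap : (C * X).trace = ∑ i, b i * y i := by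
      have := h3.symm.trans hκ
      linarith [sub_eq_zero.mp this]
    rw [Matrix.mul_smul, trace_smul, smul_eq_mul, hgap, Finset.mul_sum]
    exact Finset.sum_congr rfl fun i _ => by ring
end

section
/- The sSDLCP is monotone in the strong sense that whenever X̂, Ŷ ∈ S^{n+1} (symmetric, not necessarily semidefinite) satisfy Â(X̂) + B̂(Ŷ) = 0, one has Tr(X̂ Ŷ) = 0 (in particular Tr(X̂Ŷ) ≥ 0). -/
open Matrix BigOperators

noncomputable section

/-- Real square matrices of size `k`. -/
abbrev Mat (k : ℕ) : Type := Matrix (Fin k) (Fin k) ℝ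

/-- `dgE P q` is the block-diagonal `(n+1) × (n+1)` matrix `diag(P, q)`. -/
def dgE {n : ℕ} (P : Mat n) (q : ℝ) : Mat (n + 1) :=
  Matrix.of fun i j =>
    if hi : (i : ℕ) < n then
      (if hj : (j : ℕ) < n then P ⟨i, hi⟩ ⟨j, hj⟩ else 0)
    else (if (j : ℕ) < n then 0 else q)

/-- Index type for `ℝ^{ñ₁}`, split as the first `m` coordinates, the next `n`
coordinates, and the last `ñ+1−m` (here `k`) coordinates; `ñ₁ = m + n + (ñ+1−m)`. -/
abbrev SIdx (n m k : ℕ) : Type := Fin m ⊕ Fin n ⊕ Fin k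

/-- The linear map `Â : S^{n+1} → ℝ^{ñ₁}` of the sSDLCP. -/
def Ahat {n m k : ℕ} (A : Fin m → Mat n) (b : Fin m → ℝ) (Xh : Mat (n + 1)) :
    SIdx n m k → ℝ
  | Sum.inl i => (dgE (A i) (-(b i)) * Xh).trace
  | Sum.inr (Sum.inl i) => Xh i.castSucc (Fin.last n)
  | Sum.inr (Sum.inr _) => 0

/-- The linear map `B̂ : S^{n+1} → ℝ^{ñ₁}` of the sSDLCP, where `dd` is the vector `d`. -/
def Bhat {n m k : ℕ} (B : Fin k → Mat n) (dd : Fin k → ℝ) (Yh : Mat (n + 1)) :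
    SIdx n m k → ℝ
  | Sum.inl _ => 0
  | Sum.inr (Sum.inl _) => 0
  | Sum.inr (Sum.inr j) => (dgE (B j) (dd j) * Yh).trace

lemma dgE_cc {n : ℕ} (P : Mat n) (q : ℝ) (i j : Fin n) :
    dgE P q i.castSucc j.castSucc = P i j := by
  simp [dgE, i.is_lt, j.is_lt]

lemma dgE_cl {n : ℕ} (P : Mat n) (q : ℝ) (i : Fin n) :
    dgE P q i.castSucc (Fin.last n) = 0 := by
  simp [dgE, i.is_lt]

lemma dgE_lc {n : ℕ} (P : Mat n) (q : ℝ) (j : Fin n) :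
    dgE P q (Fin.last n) j.castSucc = 0 := by
  simp [dgE, j.is_lt]

lemma dgE_ll {n : ℕ} (P : Mat n) (q : ℝ) :
    dgE P q (Fin.last n) (Fin.last n) = q := by
  simp [dgE]

lemma trace_dgE_mul {n : ℕ} (P : Mat n) (q : ℝ) (Zh : Mat (n + 1)) :
    (dgE P q * Zh).trace
      = (P * Matrix.of (fun i j : Fin n => Zh i.castSucc j.castSucc)).trace
        + q * Zh (Fin.last n) (Fin.last n) := by
  simp only [Matrix.trace, Matrix.diag, Matrix.mul_apply, Matrix.of_apply,
    Fin.sum_univ_castSucc, dgE_cc, dgE_cl, dgE_lc, dgE_ll, zero_mul, add_zero,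
    Finset.sum_const_zero, zero_add]

/-- The sSDLCP is monotone in the strong sense: whenever symmetric
(not necessarily semidefinite) `X̂, Ŷ ∈ S^{n+1}` satisfy `Â(X̂) + B̂(Ŷ) = 0`, one has
`Tr(X̂ Ŷ) = 0`.  (Here `ñ` is written `nt`; `B j` denotes `B_{j+1}`, so `B 0 = B₁`, and
`d = (d₁, 0, …, 0)`.) -/
theorem sSDLCP_monotone
    (n m nt : ℕ) (hm1 : 1 ≤ m) (hmn : m ≤ nt) (hnt : nt = n * (n + 1) / 2)
    (A : Fin m → Mat n) (b : Fin m → ℝ)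
    (B : Fin (nt - m + 1) → Mat n) (d1 : ℝ)
    (hAsymm : ∀ i, (A i).IsSymm) (hAli : LinearIndependent ℝ A)
    (hb : ∃ i, b i ≠ 0)
    (hBsymm : ∀ j, (B j).IsSymm)
    (hd1 : d1 ≠ 0)
    (hB1A : ∀ i, -(d1 * b i) + (B 0 * A i).trace = 0)
    (hBli : LinearIndependent ℝ (fun j : {j : Fin (nt - m + 1) // j ≠ 0} => B j.1))
    (hBspan : ∀ W : Mat n,
        W ∈ Submodule.span ℝ (B '' {j | j ≠ 0}) ↔
          (W.IsSymm ∧ ∀ i, (W * A i).trace = 0))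
    (Xh Yh : Mat (n + 1)) (hXh : Xh.IsSymm) (hYh : Yh.IsSymm)
    (hsys : ∀ idx : SIdx n m (nt - m + 1),
        Ahat A b Xh idx + Bhat B (fun j => if j = 0 then d1 else 0) Yh idx = 0) :
    (Xh * Yh).trace = 0 := by
  set X : Mat n := Matrix.of (fun i j : Fin n => Xh i.castSucc j.castSucc) with hXdef
  set Y : Mat n := Matrix.of (fun i j : Fin n => Yh i.castSucc j.castSucc) with hYdef
  set ξ : ℝ := Xh (Fin.last n) (Fin.last n)
  set η : ℝ := Yh (Fin.last n) (Fin.last n)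
  -- the off-diagonal block of Xh vanishes
  have hx0 : ∀ i : Fin n, Xh i.castSucc (Fin.last n) = 0 := by
    intro i
    have := hsys (Sum.inr (Sum.inl i))
    simpa [Ahat, Bhat] using this
  have hx0' : ∀ i : Fin n, Xh (Fin.last n) i.castSucc = 0 := by
    intro i
    exact (hXh.apply i.castSucc (Fin.last n)).trans (hx0 i)
  -- constraints on X
  have hXA : ∀ i, (A i * X).trace = b i * ξ := by
    intro i
    have := hsys (Sum.inl i)
    simp only [Ahat, Bhat, add_zero] at this
    rw [trace_dgE_mul] at this
    linarith
  -- constraints on Y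
  have hBY : ∀ j, (B j * Y).trace + (if j = 0 then d1 else 0) * η = 0 := by
    intro j
    have := hsys (Sum.inr (Sum.inr j))
    simp only [Ahat, Bhat, zero_add] at this
    rw [trace_dgE_mul] at this
    exact this
  have hB0Y : (B 0 * Y).trace = -(d1 * η) := by
    have := hBY 0
    norm_num at this
    linarith
  have hBjY : ∀ j, j ≠ 0 → (B j * Y).trace = 0 := by
    intro j hj
    have := hBY j
    simp only [if_neg hj, zero_mul, add_zero] at this
    exact this
  -- X is symmetric
  have hXsymm : X.IsSymm := by
    ext i j
    simp only [Matrix.transpose_apply, hXdef, Matrix.of_apply]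
    exact hXh.apply i.castSucc j.castSucc
  -- Z := X - (ξ/d1) • B 0 lies in the span of the B j, j ≠ 0
  set Z : Mat n := X - (ξ / d1) • B 0 with hZdef
  have hZmem : Z ∈ Submodule.span ℝ (B '' {j | j ≠ 0}) := by
    rw [hBspan]
    constructor
    · unfold Matrix.IsSymm at hXsymm ⊢
      rw [hZdef, Matrix.transpose_sub, Matrix.transpose_smul, hXsymm, (hBsymm 0)]
    · intro i
      have h1 : (B 0 * A i).trace = d1 * b i := by linarith [hB1A i]
      have h2 : (X * A i).trace = b i * ξ := by
        rw [Matrix.trace_mul_comm]; exact hXA i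
      rw [hZdef, Matrix.sub_mul, Matrix.smul_mul, Matrix.trace_sub, Matrix.trace_smul,
        h1, h2, smul_eq_mul]
      field_simp
      ring
  -- the linear functional W ↦ Tr(W Y) kills the span
  let φ : Mat n →ₗ[ℝ] ℝ :=
    { toFun := fun W => (W * Y).trace
      map_add' := fun U V => by simp [Matrix.add_mul]
      map_smul' := fun c U => by simp [Matrix.smul_mul] }
  have hker : Submodule.span ℝ (B '' {j | j ≠ 0}) ≤ LinearMap.ker φ := by
    rw [Submodule.span_le]
    rintro W ⟨j, hj, rfl⟩
    exact hBjY j hj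
  have hZY : (Z * Y).trace = 0 := hker hZmem
  -- hence Tr(X Y) = -ξ η
  have hXY : (X * Y).trace = -(ξ * η) := by
    rw [hZdef, Matrix.sub_mul, Matrix.smul_mul, Matrix.trace_sub, Matrix.trace_smul,
      hB0Y, smul_eq_mul] at hZY
    have : (X * Y).trace = ξ / d1 * -(d1 * η) := by linarith
    rw [this]
    field_simp
  -- expand the full trace
  have hexp : (Xh * Yh).trace
      = (X * Y).trace
        + ∑ i : Fin n, Xh i.castSucc (Fin.last n) * Yh (Fin.last n) i.castSucc
        + ∑ i : Fin n, Xh (Fin.last n) i.castSucc * Yh i.castSucc (Fin.last n)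
        + ξ * η := by
    rw [hXdef, hYdef]
    simp only [Matrix.trace, Matrix.diag, Matrix.mul_apply, Matrix.of_apply,
      Fin.sum_univ_castSucc, Finset.sum_add_distrib]
    ring
  rw [hexp, hXY]
  simp only [hx0, hx0', zero_mul, Finset.sum_const_zero]
  ring

end
end

section
/- Suppose X̂, Ŷ ∈ S^{n+1}_+ satisfy Â(X̂) + B̂(Ŷ) = 0 and X̂ Ŷ = 0. Then X̂_{i,n+1} = 0 for every i = 1,…,n (so X̂ = diag(X, τ) where X is its top-left n×n block and τ = X̂_{n+1,n+1}), and, writing Y for the top-left n×n block of Ŷ and κ = Ŷ_{n+1,n+1}, one has: X ∈ S^n_+, Y ∈ S^n_+, τ ≥ 0, κ ≥ 0, Tr(A_i X) = b_i τ for all i = 1,…,m, d_1 κ + Tr(B_1 Y) = 0, and Tr(B_j Y) = 0 for j = 2,…,ñ+1−m. -/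
open Matrix BigOperators

noncomputable section

lemma trace_dgE_mul_s11 {n : ℕ} (P : Mat n) (q : ℝ) (M : Mat (n + 1)) :
    (dgE P q * M).trace
      = (P * M.submatrix Fin.castSucc Fin.castSucc).trace
        + q * M (Fin.last n) (Fin.last n) := by
  simp only [Matrix.trace, Matrix.diag, Matrix.mul_apply, Matrix.submatrix_apply]
  rw [Fin.sum_univ_castSucc]
  congr 1
  · apply Finset.sum_congr rfl
    intro i _
    rw [Fin.sum_univ_castSucc]
    simp [dgE_cc, dgE_cl]
  · rw [Fin.sum_univ_castSucc]
    simp [dgE_lc, dgE_ll]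

lemma diag_nonneg' {k : ℕ} {M : Mat k} (hM : M.PosSemidef) (i : Fin k) :
    0 ≤ M i i := by
  have := hM.2 (Finsupp.single i 1)
  simpa using this

/-- If `X̂, Ŷ ⪰ 0` satisfy `Â(X̂) + B̂(Ŷ) = 0` and `X̂ Ŷ = 0`, then
the off-diagonal entries `X̂_{i,n+1}` vanish (so `X̂ = diag(X, τ)` with `X` its top-left
`n×n` block and `τ = X̂_{n+1,n+1}`), and, with `Y` the top-left `n×n` block of `Ŷ` and
`κ = Ŷ_{n+1,n+1}`: `X, Y ⪰ 0`, `τ, κ ≥ 0`, `Tr(Aᵢ X) = bᵢ τ` for all `i`,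
`d₁κ + Tr(B₁ Y) = 0`, and `Tr(Bⱼ Y) = 0` for `j ≥ 2`.
(Here `ñ` is written `nt`; `B j` denotes `B_{j+1}`, so `B 0 = B₁`, and
`d = (d₁, 0, …, 0)`.) -/
theorem sSDLCP_solution_gives_homogeneous_solution
    (n m nt : ℕ) (hm1 : 1 ≤ m) (hmn : m ≤ nt) (hnt : nt = n * (n + 1) / 2)
    (A : Fin m → Mat n) (b : Fin m → ℝ)
    (B : Fin (nt - m + 1) → Mat n) (d1 : ℝ)
    (hAsymm : ∀ i, (A i).IsSymm) (hAli : LinearIndependent ℝ A)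
    (hBsymm : ∀ j, (B j).IsSymm)
    (hd1 : d1 ≠ 0)
    (hB1A : ∀ i, -(d1 * b i) + (B 0 * A i).trace = 0)
    (hBli : LinearIndependent ℝ (fun j : {j : Fin (nt - m + 1) // j ≠ 0} => B j.1))
    (hBspan : ∀ W : Mat n,
        W ∈ Submodule.span ℝ (B '' {j | j ≠ 0}) ↔
          (W.IsSymm ∧ ∀ i, (W * A i).trace = 0))
    (Xh Yh : Mat (n + 1))
    (hXh : Xh.PosSemidef) (hYh : Yh.PosSemidef)
    (hsys : ∀ idx, Ahat A b Xh idx +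
        Bhat B (fun j => if j = 0 then d1 else 0) Yh idx = 0)
    (hcomp : Xh * Yh = 0) :
    (∀ i : Fin n, Xh i.castSucc (Fin.last n) = 0) ∧
    Xh = dgE (Xh.submatrix Fin.castSucc Fin.castSucc) (Xh (Fin.last n) (Fin.last n)) ∧
    (Xh.submatrix Fin.castSucc Fin.castSucc).PosSemidef ∧
    (Yh.submatrix Fin.castSucc Fin.castSucc).PosSemidef ∧
    0 ≤ Xh (Fin.last n) (Fin.last n) ∧
    0 ≤ Yh (Fin.last n) (Fin.last n) ∧
    (∀ i, (A i * Xh.submatrix Fin.castSucc Fin.castSucc).trace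
        = b i * Xh (Fin.last n) (Fin.last n)) ∧
    d1 * Yh (Fin.last n) (Fin.last n)
        + (B 0 * Yh.submatrix Fin.castSucc Fin.castSucc).trace = 0 ∧
    (∀ j, j ≠ 0 → (B j * Yh.submatrix Fin.castSucc Fin.castSucc).trace = 0) := by
  have hoff : ∀ i : Fin n, Xh i.castSucc (Fin.last n) = 0 := by
    intro i
    have := hsys (Sum.inr (Sum.inl i))
    simpa [Ahat, Bhat] using this
  have hsym : ∀ i j, Xh j i = Xh i j := by
    intro i j
    have := congrFun (congrFun hXh.1 i) j
    simpa [Matrix.conjTranspose_apply] using this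
  have hA : ∀ i, (A i * Xh.submatrix Fin.castSucc Fin.castSucc).trace
      = b i * Xh (Fin.last n) (Fin.last n) := by
    intro i
    have := hsys (Sum.inl i)
    simp only [Ahat, Bhat, add_zero] at this
    rw [trace_dgE_mul_s11] at this
    linarith
  have hB : ∀ j, (dgE (B j) (if j = 0 then d1 else 0) * Yh).trace = 0 := by
    intro j
    have := hsys (Sum.inr (Sum.inr j))
    simpa [Ahat, Bhat] using this
  refine ⟨hoff, ?_, hXh.submatrix _, hYh.submatrix _, diag_nonneg' hXh _,
    diag_nonneg' hYh _, hA, ?_, ?_⟩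
  · ext i j
    refine Fin.lastCases ?_ (fun i' => ?_) i <;> refine Fin.lastCases ?_ (fun j' => ?_) j
    · rw [dgE_ll]
    · rw [dgE_lc, hsym, hoff]
    · rw [dgE_cl, hoff]
    · rw [dgE_cc]; rfl
  · have := hB 0
    rw [trace_dgE_mul_s11] at this
    norm_num at this
    linarith
  · intro j hj
    have := hB j
    rw [trace_dgE_mul_s11, if_neg hj] at this
    linarith


end
end

section
/- Suppose (X*, y*, Y*) is an optimal solution with zero duality gap of the primal-dual SDP pair with C = 0 satisfying strict complementarity; i.e., X* ∈ S^n_+ with Tr(A_i X*) = b_i for all i, Y* ∈ S^n_+ with ∑_{i=1}^m y*_i A_i + Y* = 0, b^T y* = 0, and X* + Y* ∈ S^n_{++}. Then (X̂*, Ŷ*) := (diag(X*, 1), diag(Y*, 0)) is a strictly complementary solution of the sSDLCP: Â(X̂*) + B̂(Ŷ*) = 0, X̂* Ŷ* = 0, X̂*, Ŷ* ∈ S^{n+1}_+, and X̂* + Ŷ* ∈ S^{n+1}_{++}. -/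
open Matrix BigOperators

noncomputable section

lemma dgE_mul {n : ℕ} (P R : Mat n) (q s : ℝ) :
    dgE P q * dgE R s = dgE (P * R) (q * s) := by
  ext i j
  rw [Matrix.mul_apply, Fin.sum_univ_castSucc]
  induction i using Fin.lastCases with
  | last =>
    induction j using Fin.lastCases with
    | last => simp [dgE_ll, dgE_lc]
    | cast j => simp [dgE_ll, dgE_lc, dgE_cl, dgE_cc]
  | cast i =>
    induction j using Fin.lastCases with
    | last => simp [dgE_ll, dgE_lc, dgE_cl, dgE_cc]
    | cast j => simp [dgE_cc, dgE_cl, dgE_lc, Matrix.mul_apply]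

lemma dgE_trace {n : ℕ} (P : Mat n) (q : ℝ) :
    (dgE P q).trace = P.trace + q := by
  simp [Matrix.trace, Matrix.diag, Fin.sum_univ_castSucc, dgE_cc, dgE_ll]

lemma dgE_add {n : ℕ} (P R : Mat n) (q s : ℝ) :
    dgE P q + dgE R s = dgE (P + R) (q + s) := by
  ext i j
  simp only [Matrix.add_apply, dgE, Matrix.of_apply]
  split_ifs <;> simp

lemma dgE_zero {n : ℕ} : dgE (0 : Mat n) 0 = 0 := by
  ext i j
  simp only [dgE, Matrix.of_apply, Matrix.zero_apply]
  split_ifs <;> simp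

lemma dgE_dot {n : ℕ} (P : Mat n) (q : ℝ) (x : Fin (n + 1) → ℝ) :
    x ⬝ᵥ (dgE P q) *ᵥ x =
      (fun i => x i.castSucc) ⬝ᵥ P *ᵥ (fun i => x i.castSucc)
        + q * (x (Fin.last n)) ^ 2 := by
  have hmv : ∀ i : Fin n, ((dgE P q) *ᵥ x) i.castSucc
      = (P *ᵥ fun j => x j.castSucc) i := by
    intro i
    rw [Matrix.mulVec, Matrix.mulVec, dotProduct, Fin.sum_univ_castSucc]
    simp [dgE_cc, dgE_cl, dotProduct]
  have hml : ((dgE P q) *ᵥ x) (Fin.last n) = q * x (Fin.last n) := by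
    rw [Matrix.mulVec, dotProduct, Fin.sum_univ_castSucc]
    simp [dgE_lc, dgE_ll]
  rw [dotProduct, Fin.sum_univ_castSucc]
  simp only [hmv, hml]
  rw [dotProduct]
  ring

lemma dgE_isHermitian {n : ℕ} {P : Mat n} (hP : P.IsHermitian) (q : ℝ) :
    (dgE P q).IsHermitian := by
  ext i j
  simp only [Matrix.conjTranspose_apply, star_trivial]
  induction i using Fin.lastCases with
  | last =>
    induction j using Fin.lastCases with
    | last => rfl
    | cast j => rw [dgE_cl, dgE_lc]
  | cast i =>
    induction j using Fin.lastCases with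
    | last => rw [dgE_lc, dgE_cl]
    | cast j =>
      rw [dgE_cc, dgE_cc]
      have := congrFun (congrFun hP j) i
      simpa using this.symm

lemma dgE_posSemidef {n : ℕ} {P : Mat n} {q : ℝ} (hP : P.PosSemidef) (hq : 0 ≤ q) :
    (dgE P q).PosSemidef := by
  refine .of_dotProduct_mulVec_nonneg (dgE_isHermitian hP.1 q) fun x => ?_
  rw [star_trivial, dgE_dot]
  have h1 := hP.dotProduct_mulVec_nonneg (fun i => x i.castSucc)
  rw [star_trivial] at h1
  have h2 : 0 ≤ q * (x (Fin.last n)) ^ 2 := mul_nonneg hq (sq_nonneg _)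
  linarith

lemma dgE_posDef {n : ℕ} {P : Mat n} {q : ℝ} (hP : P.PosDef) (hq : 0 < q) :
    (dgE P q).PosDef := by
  refine .of_dotProduct_mulVec_pos (dgE_isHermitian hP.1 q) fun x hx => ?_
  rw [star_trivial, dgE_dot]
  by_cases hl : x (Fin.last n) = 0
  · have hxc : (fun i : Fin n => x i.castSucc) ≠ 0 := by
      intro hc
      apply hx
      funext i
      induction i using Fin.lastCases with
      | last => exact hl
      | cast i => exact congrFun hc i
    have h1 := hP.dotProduct_mulVec_pos (x := fun i => x i.castSucc) hxc
    rw [star_trivial] at h1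
    have h2 : 0 ≤ q * (x (Fin.last n)) ^ 2 := mul_nonneg hq.le (sq_nonneg _)
    linarith
  · have h1 := hP.posSemidef.dotProduct_mulVec_nonneg (fun i => x i.castSucc)
    rw [star_trivial] at h1
    have h2 : 0 < (x (Fin.last n)) ^ 2 :=
      lt_of_le_of_ne (sq_nonneg _) (Ne.symm (pow_ne_zero 2 hl))
    have := mul_pos hq h2
    linarith

lemma trace_conjT_mul_self_zero {k : ℕ} {M : Mat k} (h : (Mᴴ * M).trace = 0) :
    M = 0 := by
  have hexp : (Mᴴ * M).trace = ∑ j, ∑ i, (M i j) ^ 2 := by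
    simp [Matrix.trace, Matrix.diag, Matrix.mul_apply, Matrix.conjTranspose_apply, sq]
  rw [hexp] at h
  have h2 := (Finset.sum_eq_zero_iff_of_nonneg
    (fun j _ => Finset.sum_nonneg fun i _ => sq_nonneg (M i j))).mp h
  ext i j
  have h3 := (Finset.sum_eq_zero_iff_of_nonneg
    (fun i _ => sq_nonneg (M i j))).mp (h2 j (Finset.mem_univ j)) i (Finset.mem_univ i)
  simpa using (pow_eq_zero_iff two_ne_zero).mp h3

open scoped MatrixOrder in
lemma psd_mul_eq_zero {k : ℕ} {X Y : Mat k} (hX : X.PosSemidef) (hY : Y.PosSemidef)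
    (h : (X * Y).trace = 0) : X * Y = 0 := by
  classical
  set S := CFC.sqrt X with hSdef
  set T := CFC.sqrt Y with hTdef
  have hSh : Sᴴ = S := (Matrix.nonneg_iff_posSemidef.mp (CFC.sqrt_nonneg X)).1
  have hTh : Tᴴ = T := (Matrix.nonneg_iff_posSemidef.mp (CFC.sqrt_nonneg Y)).1
  have hSS : S * S = X := CFC.sqrt_mul_sqrt_self X hX.nonneg
  have hTT : T * T = Y := CFC.sqrt_mul_sqrt_self Y hY.nonneg
  have hTS : T * S = 0 := by
    apply trace_conjT_mul_self_zero
    have e1 : (T * S)ᴴ * (T * S) = (S * T) * (T * S) := by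
      rw [Matrix.conjTranspose_mul, hSh, hTh, Matrix.mul_assoc]
    have e2 : (T * S) * (S * T) = T * (X * T) := by
      rw [← hSS]; noncomm_ring
    rw [e1, Matrix.trace_mul_comm, e2, Matrix.trace_mul_comm, Matrix.mul_assoc, hTT, h]
  have hST : S * T = 0 := by
    have : (T * S)ᴴ = S * T := by rw [Matrix.conjTranspose_mul, hSh, hTh]
    rw [← this, hTS, Matrix.conjTranspose_zero]
  calc X * Y = S * (S * T) * T := by rw [← hSS, ← hTT]; noncomm_ring
    _ = 0 := by rw [hST]; noncomm_ring


/-- If `(X*, y*, Y*)` is an optimal solution with zero duality gap of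
the primal-dual SDP pair with `C = 0` satisfying strict complementarity, then
`(X̂*, Ŷ*) = (diag(X*, 1), diag(Y*, 0))` is a strictly complementary solution of the
sSDLCP: `Â(X̂*) + B̂(Ŷ*) = 0`, `X̂* Ŷ* = 0`, `X̂*, Ŷ* ⪰ 0`, and `X̂* + Ŷ* ≻ 0`.
(Here `ñ` is written `nt`; `B j` denotes `B_{j+1}`, so `B 0 = B₁`, and
`d = (d₁, 0, …, 0)`.) -/
theorem strict_complementarity_transfers_to_sSDLCP
    (n m nt : ℕ) (hm1 : 1 ≤ m) (hmn : m ≤ nt) (hnt : nt = n * (n + 1) / 2)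
    (A : Fin m → Mat n) (b : Fin m → ℝ)
    (B : Fin (nt - m + 1) → Mat n) (d1 : ℝ)
    (hAsymm : ∀ i, (A i).IsSymm) (hAli : LinearIndependent ℝ A)
    (hBsymm : ∀ j, (B j).IsSymm)
    (hd1 : d1 ≠ 0)
    (hB1A : ∀ i, -(d1 * b i) + (B 0 * A i).trace = 0)
    (hBli : LinearIndependent ℝ (fun j : {j : Fin (nt - m + 1) // j ≠ 0} => B j.1))
    (hBspan : ∀ W : Mat n,
        W ∈ Submodule.span ℝ (B '' {j | j ≠ 0}) ↔
          (W.IsSymm ∧ ∀ i, (W * A i).trace = 0))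
    (Xs Ys : Mat n) (ys : Fin m → ℝ)
    (hXs : Xs.PosSemidef) (hfeasP : ∀ i, (A i * Xs).trace = b i)
    (hYs : Ys.PosSemidef) (hfeasD : (∑ i, ys i • A i) + Ys = 0)
    (hgap : ∑ i, b i * ys i = 0)
    (hsc : (Xs + Ys).PosDef) :
    (∀ idx, Ahat A b (dgE Xs 1) idx +
        Bhat B (fun j => if j = 0 then d1 else 0) (dgE Ys 0) idx = 0) ∧
    dgE Xs 1 * dgE Ys 0 = 0 ∧
    (dgE Xs 1).PosSemidef ∧ (dgE Ys 0).PosSemidef ∧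
    (dgE Xs 1 + dgE Ys 0).PosDef := by
  have hYsum : Ys = -(∑ i, ys i • A i) := eq_neg_of_add_eq_zero_right hfeasD
  have htrY : ∀ W : Mat n, (W * Ys).trace = -∑ i, ys i * (W * A i).trace := by
    intro W
    rw [hYsum]
    simp [Matrix.mul_sum, Matrix.trace_sum, Matrix.mul_smul, Matrix.trace_smul,
      smul_eq_mul]
  have htraceBY : ∀ j, (B j * Ys).trace = 0 := by
    intro j
    rw [htrY]
    by_cases hj : j = 0
    · subst hj
      have hBA : ∀ i, (B 0 * A i).trace = d1 * b i := by
        intro i; have := hB1A i; linarith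
      have : ∑ i, ys i * (B 0 * A i).trace = d1 * ∑ i, b i * ys i := by
        rw [Finset.mul_sum]
        refine Finset.sum_congr rfl fun i _ => ?_
        rw [hBA i]; ring
      rw [this, hgap]; ring
    · have hmem : B j ∈ Submodule.span ℝ (B '' {j | j ≠ 0}) :=
        Submodule.subset_span ⟨j, hj, rfl⟩
      have hz := ((hBspan (B j)).mp hmem).2
      simp [hz]
  have htraceXY : (Xs * Ys).trace = 0 := by
    rw [htrY]
    have : ∑ i, ys i * (Xs * A i).trace = ∑ i, b i * ys i := by
      refine Finset.sum_congr rfl fun i _ => ?_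
      rw [Matrix.trace_mul_comm, hfeasP i]; ring
    rw [this, hgap]; ring
  refine ⟨?_, ?_, dgE_posSemidef hXs zero_le_one, dgE_posSemidef hYs le_rfl, ?_⟩
  · rintro (i | i | j)
    · show (dgE (A i) (-(b i)) * dgE Xs 1).trace + 0 = 0
      rw [dgE_mul, dgE_trace, hfeasP i]; ring
    · show dgE Xs 1 i.castSucc (Fin.last n) + 0 = 0
      rw [dgE_cl]; ring
    · show 0 + (dgE (B j) (if j = 0 then d1 else 0) * dgE Ys 0).trace = 0
      rw [dgE_mul, dgE_trace, htraceBY j]; ring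
  · rw [dgE_mul, psd_mul_eq_zero hXs hYs htraceXY, mul_zero, dgE_zero]
  · rw [dgE_add]
    have : (1 : ℝ) + 0 = 1 := by norm_num
    rw [this]
    exact dgE_posDef hsc one_pos

end
end
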